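/- Every generator of the ideal I annihilates F under the contraction action, so that I ⊆ Ann(F); moreover no nonzero linear form of S annihilates F, and consequently the graded quotient S/Ann(F) has Hilbert function (1,n,n,1) (dim_k (S/Ann(F))_i equals 1, n, n, 1 for i = 0,1,2,3 and 0 otherwise). -/

import Mathlib

open MvPolynomial

variable {K : Type*} [Field K] {σ : Type*}

noncomputable def contract (s f : MvPolynomial σ K) : MvPolynomial σ K :=
  Finsupp.sum (AddMonoidAlgebra.coeff s) fun b cb => cb • f.divMonomial b

lemma contract_monomial (b : σ →₀ ℕ) (c : K) (f : MvPolynomial σ K) :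
    contract (monomial b c) f = c • f.divMonomial b := by
  unfold contract
  rw [← single_eq_monomial, AddMonoidAlgebra.coeff_single]
  exact Finsupp.sum_single_index (by simp)

lemma contract_add_left (s t f : MvPolynomial σ K) :
    contract (s + t) f = contract s f + contract t f := by
  unfold contract
  rw [AddMonoidAlgebra.coeff_add]
  exact Finsupp.sum_add_index' (fun b => by simp) (fun b c c' => add_smul _ _ _)

lemma contract_zero_left (f : MvPolynomial σ K) : contract 0 f = 0 :=
  Finsupp.sum_zero_index

lemma contract_zero_right (s : MvPolynomial σ K) : contract s (0 : MvPolynomial σ K) = 0 := by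
  unfold contract
  simp

lemma smul_divMonomial (c : K) (f : MvPolynomial σ K) (b : σ →₀ ℕ) :
    (c • f).divMonomial b = c • f.divMonomial b := by
  ext a
  simp [coeff_divMonomial, MvPolynomial.coeff_smul]

lemma contract_add_right (s f g : MvPolynomial σ K) :
    contract s (f + g) = contract s f + contract s g := by
  unfold contract
  rw [← Finsupp.sum_add]
  exact Finsupp.sum_congr fun b _ => by rw [add_divMonomial, smul_add]

lemma contract_mul (s t f : MvPolynomial σ K) :
    contract (s * t) f = contract s (contract t f) := by
  induction s using MvPolynomial.induction_on' with
  | add p q hp hq => rw [add_mul, contract_add_left, contract_add_left, hp, hq]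
  | monomial a c =>
    induction t using MvPolynomial.induction_on' with
    | add p q hp hq =>
      rw [mul_add, contract_add_left, contract_add_left p q, contract_add_right, hp, hq]
    | monomial b d =>
      rw [monomial_mul, contract_monomial, contract_monomial, contract_monomial,
        smul_divMonomial, mul_smul, ← divMonomial_add, add_comm a b]

/-- The apolar (annihilator) ideal of `f` under contraction. -/
noncomputable def annIdeal (f : MvPolynomial σ K) : Ideal (MvPolynomial σ K) where
  carrier := {s | contract s f = 0}
  zero_mem' := contract_zero_left f
  add_mem' := fun hs ht => by
    simp only [Set.mem_setOf_eq] at *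
    rw [contract_add_left, hs, ht, add_zero]
  smul_mem' := fun c x hx => by
    simp only [Set.mem_setOf_eq] at *
    rw [smul_eq_mul, contract_mul, hx, contract_zero_right]

/-- The dimension of the degree-`i` graded piece of `S/I`. -/
noncomputable def hilbQ (I : Ideal (MvPolynomial σ K)) (i : ℕ) : ℕ :=
  Module.finrank K
    (↥(homogeneousSubmodule σ K i) ⧸
      ((I.restrictScalars K).comap (homogeneousSubmodule σ K i).subtype))

/-- `Apolar f` has Hilbert function `(1,n,n,1)` and `S/(Ann f)²` has the smallest
possible Hilbert function in degrees 4 and 5. -/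
noncomputable def SmallTangentSpace (n : ℕ) (f : MvPolynomial σ K) : Prop :=
  hilbQ (annIdeal f) 0 = 1 ∧ hilbQ (annIdeal f) 1 = n ∧ hilbQ (annIdeal f) 2 = n ∧
    hilbQ (annIdeal f) 3 = 1 ∧ (∀ i : ℕ, 3 < i → hilbQ (annIdeal f) i = 0) ∧
    hilbQ ((annIdeal f) ^ 2) 4 = n ∧ hilbQ ((annIdeal f) ^ 2) 5 = 0

variable (K : Type*) [Field K]

/-- The variable `x_i` (with `x ∈ {a,b,c}` encoded as `Fin 3`). -/
noncomputable def V (m : ℕ) (x : Fin 3) (i : ZMod m) : MvPolynomial (Fin 3 × ZMod m) K :=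
  MvPolynomial.X (x, i)

/-- The generators of the ideal `I`. -/
noncomputable def IabcGens (m : ℕ) : Set (MvPolynomial (Fin 3 × ZMod m) K) :=
  {p | ∃ (x y : Fin 3) (i j : ZMod m),
      j ≠ i - 1 ∧ j ≠ i ∧ j ≠ i + 1 ∧ p = V K m x i * V K m y j} ∪
  {p | ∃ (x y : Fin 3) (i j : ZMod m), x ≠ y ∧
      p = V K m x i * V K m y (i + 1) - V K m x j * V K m y (j + 1)} ∪
  {p | ∃ (x y z : Fin 3) (i : ZMod m), x ≠ y ∧ x ≠ z ∧ y ≠ z ∧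
      p = V K m x i ^ 2 - V K m y (i - 1) * V K m z (i - 1)} ∪
  {p | ∃ (x y z : Fin 3) (i : ZMod m), x ≠ y ∧ x ≠ z ∧ y ≠ z ∧
      p = V K m x i * V K m y i - V K m z (i - 1) * V K m z i}

/-- The ideal `I`. -/
noncomputable def Iabc (m : ℕ) : Ideal (MvPolynomial (Fin 3 × ZMod m) K) :=
  Ideal.span (IabcGens K m)

/-- The ideal `J = I² + (a_i a_{i+1} a_{i+2}², b_i b_{i+1} b_{i+2}², c_i c_{i+1} c_{i+2}²)`. -/
noncomputable def Jabc (m : ℕ) : Ideal (MvPolynomial (Fin 3 × ZMod m) K) :=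
  Iabc K m ^ 2 ⊔
    Ideal.span {p | ∃ (x : Fin 3) (i : ZMod m),
      p = V K m x i * V K m x (i + 1) * V K m x (i + 2) ^ 2}

/-- The cubic `F = Σ a_i b_i c_i + a_i a_{i+1}^[2] + b_i b_{i+1}^[2] + c_i c_{i+1}^[2]`
in the divided power module (basis element `x^[e]` is represented by `monomial e 1`). -/
noncomputable def Fcubic (m : ℕ) : MvPolynomial (Fin 3 × ZMod m) K :=
  ∑ i ∈ Finset.range m,
    (monomial (Finsupp.single ((0 : Fin 3), (i : ZMod m)) 1 +
        Finsupp.single ((1 : Fin 3), (i : ZMod m)) 1 +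
        Finsupp.single ((2 : Fin 3), (i : ZMod m)) 1) (1 : K) +
      monomial (Finsupp.single ((0 : Fin 3), (i : ZMod m)) 1 +
        Finsupp.single ((0 : Fin 3), ((i + 1 : ℕ) : ZMod m)) 2) (1 : K) +
      monomial (Finsupp.single ((1 : Fin 3), (i : ZMod m)) 1 +
        Finsupp.single ((1 : Fin 3), ((i + 1 : ℕ) : ZMod m)) 2) (1 : K) +
      monomial (Finsupp.single ((2 : Fin 3), (i : ZMod m)) 1 +
        Finsupp.single ((2 : Fin 3), ((i + 1 : ℕ) : ZMod m)) 2) (1 : K))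

/-!
Contraction by the monomial `x^b` sends the divided power `x^[a]` to `x^[a-b]`, so the
coefficient of `x^[a]` in `s ∘ F` is `∑_b s_b F_{a+b}`. The exponents of `F` are those of
`a_j b_j c_j` and `x_j x_{j+1}^[2]`, and a quadratic monomial either divides none of them
(the monomial generators of `I` and `x_i y_{i+1}`) or exactly one; in the latter case both
terms of each binomial generator contract `F` to the same variable.

In particular every variable `x_i` is `(y_i z_i) ∘ F`. This gives degree 2 of the Hilbert
function at once, and degree 1 because contraction is commutative: if `s ∘ F = 0` for a linear
form `s`, then `s ∘ x_i = (y_i z_i) ∘ (s ∘ F) = 0` for every variable, so `s = 0`. In degrees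
`0`, `3` and above `3` only `F ≠ 0` and the homogeneity of `F` matter.
-/

open Finsupp

section Homogeneous

variable {R : Type*} [CommSemiring R] {σ ι : Type*}

lemma MvPolynomial.IsHomogeneous.degree_eq {p : MvPolynomial σ R} {n : ℕ}
    (hp : p.IsHomogeneous n) {d : σ →₀ ℕ} (hd : coeff d p ≠ 0) : d.degree = n := by
  rw [degree_eq_weight_one]
  exact hp hd

lemma MvPolynomial.IsHomogeneous.eq_C_coeff_zero {p : MvPolynomial σ R}
    (hp : p.IsHomogeneous 0) : p = C (coeff 0 p) :=
  totalDegree_eq_zero_iff_eq_C.mp ((totalDegree_zero_iff_isHomogeneous σ).mpr hp)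

lemma MvPolynomial.IsHomogeneous.eq_zero_of_forall_coeff_single {p : MvPolynomial σ R}
    (hp : p.IsHomogeneous 1) (h : ∀ u, coeff (single u 1) p = 0) : p = 0 := by
  ext e
  by_contra he
  obtain ⟨u, rfl⟩ := (sum_eq_one_iff e).mp (hp.degree_eq he)
  exact he (h u)

lemma coeff_sum_monomial_of_injective [Fintype ι] {g : ι → σ →₀ ℕ}
    (hg : Function.Injective g) (p : ι) : coeff (g p) (∑ q, monomial (g q) (1 : R)) = 1 := by
  classical
  simp only [coeff_sum, coeff_monomial]
  rw [Finset.sum_eq_single p (fun q _ hq => if_neg (hg.ne hq)) (by simp), if_pos rfl]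

lemma coeff_sum_monomial_of_notMem_range [Fintype ι] {g : ι → σ →₀ ℕ} {e : σ →₀ ℕ}
    (he : e ∉ Set.range g) : coeff e (∑ q, monomial (g q) (1 : R)) = 0 := by
  classical
  simp only [coeff_sum, coeff_monomial]
  exact Finset.sum_eq_zero fun p _ => if_neg fun h => he ⟨p, h⟩

lemma le_apply_of_single_add_single_le {u v : σ} {a b : ℕ} {e : σ →₀ ℕ}
    (h : single u a + single v b ≤ e) : a ≤ e u ∧ b ≤ e v :=
  ⟨by simpa using (le_self_add.trans h) u, by simpa using (le_add_self.trans h) v⟩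

end Homogeneous

section Contraction

variable {K : Type*} [Field K] {σ : Type*}

lemma coeff_contract (s f : MvPolynomial σ K) (a : σ →₀ ℕ) :
    coeff a (contract s f) = ∑ b ∈ s.support, coeff b s * coeff (b + a) f := by
  rw [contract, Finsupp.sum, coeff_sum]
  exact Finset.sum_congr rfl fun b _ => by rw [coeff_smul, coeff_divMonomial, smul_eq_mul]; rfl

lemma contract_C (c : K) (f : MvPolynomial σ K) : contract (C c) f = c • f := by
  rw [C_apply, contract_monomial, divMonomial_zero]

lemma contract_one (f : MvPolynomial σ K) : contract 1 f = f := by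
  rw [← C_1, contract_C, one_smul]

lemma contract_comm (s t f : MvPolynomial σ K) :
    contract s (contract t f) = contract t (contract s f) := by
  rw [← contract_mul, mul_comm, contract_mul]

lemma contract_X_mul_X (u v : σ) (f : MvPolynomial σ K) :
    contract (X u * X v) f = f.divMonomial (single u 1 + single v 1) := by
  rw [X, X, monomial_mul, one_mul, contract_monomial, one_smul]

lemma contract_X_sq (u : σ) (f : MvPolynomial σ K) :
    contract (X u ^ 2) f = f.divMonomial (single u 2) := by
  rw [sq, contract_X_mul_X, ← single_add]

noncomputable def contractLinearMap (f : MvPolynomial σ K) :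
    MvPolynomial σ K →ₗ[K] MvPolynomial σ K where
  toFun s := contract s f
  map_add' s t := contract_add_left s t f
  map_smul' c s := by rw [smul_eq_C_mul, contract_mul, contract_C]; rfl

@[simp] lemma contractLinearMap_apply (f s : MvPolynomial σ K) :
    contractLinearMap f s = contract s f := rfl

lemma ker_contractLinearMap (f : MvPolynomial σ K) :
    LinearMap.ker (contractLinearMap f) = (annIdeal f).restrictScalars K := rfl

lemma contract_sub (s t f : MvPolynomial σ K) :
    contract (s - t) f = contract s f - contract t f :=
  map_sub (contractLinearMap f) s t

lemma coeff_zero_contract_X (s : MvPolynomial σ K) (u : σ) :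
    coeff 0 (contract s (X u)) = coeff (single u 1) s := by
  classical
  simp only [coeff_contract, add_zero, coeff_X, mul_ite, mul_one, mul_zero, Finset.sum_ite_eq,
    MvPolynomial.mem_support_iff, ne_eq, ite_not, ite_eq_right_iff]
  exact fun h => h.symm

lemma exists_coeff_ne_zero_of_coeff_contract_ne_zero {s f : MvPolynomial σ K} {a : σ →₀ ℕ}
    (h : coeff a (contract s f) ≠ 0) : ∃ b, coeff b s ≠ 0 ∧ coeff (b + a) f ≠ 0 := by
  rw [coeff_contract] at h
  obtain ⟨b, hb, hba⟩ := Finset.exists_ne_zero_of_sum_ne_zero h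
  exact ⟨b, MvPolynomial.mem_support_iff.mp hb, right_ne_zero_of_mul hba⟩

lemma MvPolynomial.IsHomogeneous.contract {s f : MvPolynomial σ K} {d n : ℕ}
    (hs : s.IsHomogeneous d) (hf : f.IsHomogeneous n) :
    (contract s f).IsHomogeneous (n - d) := by
  intro a ha
  obtain ⟨b, hb, hba⟩ := exists_coeff_ne_zero_of_coeff_contract_ne_zero ha
  have := hf.degree_eq hba
  rw [map_add, hs.degree_eq hb] at this
  change weight (fun _ => 1) a = n - d
  rw [← degree_eq_weight_one]
  omega

lemma contract_eq_zero_of_lt {s f : MvPolynomial σ K} {d n : ℕ}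
    (hs : s.IsHomogeneous d) (hf : f.IsHomogeneous n) (hnd : n < d) : contract s f = 0 := by
  ext a
  by_contra ha
  obtain ⟨b, hb, hba⟩ := exists_coeff_ne_zero_of_coeff_contract_ne_zero ha
  have := hf.degree_eq hba
  rw [map_add, hs.degree_eq hb] at this
  omega

lemma contract_ne_zero_of_forall_X_eq_contract {f s : MvPolynomial σ K}
    (hX : ∀ u, ∃ q, contract q f = X u) (hs : s.IsHomogeneous 1) (hs0 : s ≠ 0) :
    contract s f ≠ 0 := by
  intro hsf
  refine hs0 (hs.eq_zero_of_forall_coeff_single fun u => ?_)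
  obtain ⟨q, hq⟩ := hX u
  rw [← coeff_zero_contract_X, ← hq, contract_comm, hsf, contract_zero_right, coeff_zero]

end Contraction

section HilbertFunction

variable {K : Type*} [Field K] {σ : Type*}

lemma finrank_homogeneousSubmodule_one [Fintype σ] :
    Module.finrank K (homogeneousSubmodule σ K 1) = Fintype.card σ := by
  rw [homogeneousSubmodule_one_eq_span_X, finrank_span_eq_card (linearIndependent_X σ K)]

lemma hilbQ_annIdeal_eq_finrank_range (f : MvPolynomial σ K) (i : ℕ) :
    hilbQ (annIdeal f) i = Module.finrank K
      (LinearMap.range ((contractLinearMap f).domRestrict (homogeneousSubmodule σ K i))) := by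
  rw [hilbQ, ← ker_contractLinearMap, ← LinearMap.ker_domRestrict]
  exact (LinearMap.quotKerEquivRange _).finrank_eq

lemma hilbQ_annIdeal_eq_finrank_map (f : MvPolynomial σ K) (i : ℕ) :
    hilbQ (annIdeal f) i =
      Module.finrank K ((homogeneousSubmodule σ K i).map (contractLinearMap f)) := by
  rw [hilbQ_annIdeal_eq_finrank_range, LinearMap.range_domRestrict]

lemma map_contractLinearMap_homogeneousSubmodule_le {f : MvPolynomial σ K} {n : ℕ}
    (hf : f.IsHomogeneous n) (i : ℕ) :
    (homogeneousSubmodule σ K i).map (contractLinearMap f) ≤ homogeneousSubmodule σ K (n - i) :=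
  Submodule.map_le_iff_le_comap.mpr fun _ hs => hs.contract hf

lemma hilbQ_annIdeal_zero {f : MvPolynomial σ K} (hf : f ≠ 0) : hilbQ (annIdeal f) 0 = 1 := by
  rw [hilbQ_annIdeal_eq_finrank_map, homogeneousSubmodule_zero, Submodule.one_eq_span,
    Submodule.map_span, Set.image_singleton, contractLinearMap_apply, contract_one,
    finrank_span_singleton hf]

lemma hilbQ_annIdeal_of_lt {f : MvPolynomial σ K} {n i : ℕ} (hf : f.IsHomogeneous n)
    (hi : n < i) : hilbQ (annIdeal f) i = 0 := by
  have : (homogeneousSubmodule σ K i).map (contractLinearMap f) = ⊥ := by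
    rw [eq_bot_iff]
    rintro _ ⟨s, hs, rfl⟩
    exact contract_eq_zero_of_lt hs hf hi
  rw [hilbQ_annIdeal_eq_finrank_map, this, finrank_bot]

lemma hilbQ_annIdeal_self {f : MvPolynomial σ K} {n : ℕ} (hf : f.IsHomogeneous n)
    (hf0 : f ≠ 0) : hilbQ (annIdeal f) n = 1 := by
  obtain ⟨e, he⟩ := exists_coeff_ne_zero hf0
  suffices (homogeneousSubmodule σ K n).map (contractLinearMap f) = K ∙ 1 by
    rw [hilbQ_annIdeal_eq_finrank_map, this, finrank_span_singleton one_ne_zero]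
  refine le_antisymm ?_ (Submodule.span_singleton_le_iff_mem _ _ |>.mpr ?_)
  · simpa [Submodule.one_eq_span] using map_contractLinearMap_homogeneousSubmodule_le hf n
  · -- contracting `f` by its own monomial `e` leaves the constant `coeff e f`
    have hs : (monomial e (coeff e f)⁻¹).IsHomogeneous n :=
      isHomogeneous_monomial _ (hf.degree_eq he)
    refine ⟨_, hs, ?_⟩
    have h0 : (contract (monomial e (coeff e f)⁻¹) f).IsHomogeneous 0 := by
      simpa using hs.contract hf
    rw [contractLinearMap_apply, h0.eq_C_coeff_zero, contract_monomial, coeff_smul,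
      coeff_divMonomial, add_zero, smul_eq_mul, inv_mul_cancel₀ he, C_1]

lemma hilbQ_annIdeal_one [Fintype σ] {f : MvPolynomial σ K}
    (hf : ∀ s : MvPolynomial σ K, s.IsHomogeneous 1 → s ≠ 0 → contract s f ≠ 0) :
    hilbQ (annIdeal f) 1 = Fintype.card σ := by
  rw [hilbQ_annIdeal_eq_finrank_range, LinearMap.finrank_range_of_inj,
    finrank_homogeneousSubmodule_one]
  rw [← LinearMap.ker_eq_bot, eq_bot_iff]
  rintro s hs
  by_contra hs0
  exact hf s s.2 (by simpa using hs0) hs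

lemma hilbQ_annIdeal_of_forall_X_mem [Fintype σ] {f : MvPolynomial σ K} {i : ℕ}
    (hf : f.IsHomogeneous (i + 1))
    (hX : ∀ u, X u ∈ (homogeneousSubmodule σ K i).map (contractLinearMap f)) :
    hilbQ (annIdeal f) i = Fintype.card σ := by
  suffices (homogeneousSubmodule σ K i).map (contractLinearMap f) = homogeneousSubmodule σ K 1 by
    rw [hilbQ_annIdeal_eq_finrank_map, this, finrank_homogeneousSubmodule_one]
  refine le_antisymm ?_ ?_
  · simpa using map_contractLinearMap_homogeneousSubmodule_le hf i
  · rw [homogeneousSubmodule_one_eq_span_X, Submodule.span_le]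
    rintro _ ⟨u, rfl⟩
    exact hX u

end HilbertFunction

section CubicExponents

variable {m : ℕ}

lemma ZMod.ne_add_natCast {n : ℕ} (hn : 0 < n) (hnm : n < m) (j : ZMod m) : j ≠ j + n := by
  rw [Ne, left_eq_add, ZMod.natCast_eq_zero_iff]
  exact fun h => absurd (Nat.le_of_dvd hn h) (by omega)

/-- Exponents of the terms of `Fcubic`: `none` gives `a_j b_j c_j`, `some x` gives
`x_j x_{j+1}^[2]`. -/
noncomputable def fcubicExponent (m : ℕ) :
    Option (Fin 3) × ZMod m → (Fin 3 × ZMod m →₀ ℕ)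
  | (none, j) => single (0, j) 1 + single (1, j) 1 + single (2, j) 1
  | (Option.some x, j) => single (x, j) 1 + single (x, j + 1) 2

lemma fcubicExponent_none_apply (k : ZMod m) (x : Fin 3) (i : ZMod m) :
    fcubicExponent m (none, k) (x, i) = if k = i then 1 else 0 := by
  fin_cases x <;> simp [fcubicExponent, single_apply, Prod.ext_iff]

lemma fcubicExponent_some_apply (w : Fin 3) (k : ZMod m) (y : Fin 3) (j : ZMod m) :
    fcubicExponent m (some w, k) (y, j) =
      (if w = y ∧ k = j then 1 else 0) + (if w = y ∧ k + 1 = j then 2 else 0) := by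
  simp only [fcubicExponent, Finsupp.add_apply, single_apply, Prod.mk.injEq]

lemma degree_fcubicExponent (p : Option (Fin 3) × ZMod m) :
    (fcubicExponent m p).degree = 3 := by
  rcases p with ⟨_ | x, j⟩ <;> simp [fcubicExponent]

lemma eq_of_one_le_fcubicExponent_none {k i : ZMod m} {x : Fin 3}
    (h : 1 ≤ fcubicExponent m (none, k) (x, i)) : k = i := by
  rw [fcubicExponent_none_apply] at h
  split_ifs at h with hk
  exacts [hk, absurd h (by omega)]

lemma not_two_le_fcubicExponent_none (k : ZMod m) (x : Fin 3) (i : ZMod m) :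
    ¬ 2 ≤ fcubicExponent m (none, k) (x, i) := by
  rw [fcubicExponent_none_apply]
  split_ifs <;> omega

lemma of_one_le_fcubicExponent_some {w y : Fin 3} {k j : ZMod m}
    (h : 1 ≤ fcubicExponent m (some w, k) (y, j)) : w = y ∧ (k = j ∨ k + 1 = j) := by
  rw [fcubicExponent_some_apply] at h
  split_ifs at h with h1 h2 h2
  exacts [⟨h1.1, .inl h1.2⟩, ⟨h1.1, .inl h1.2⟩, ⟨h2.1, .inr h2.2⟩, absurd h (by omega)]

lemma of_two_le_fcubicExponent_some {w y : Fin 3} {k j : ZMod m}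
    (h : 2 ≤ fcubicExponent m (some w, k) (y, j)) : w = y ∧ k + 1 = j := by
  rw [fcubicExponent_some_apply] at h
  split_ifs at h with h1 h2 h2
  exacts [h2, absurd h (by omega), h2, absurd h (by omega)]

lemma one_le_fcubicExponent_none (k : ZMod m) (x : Fin 3) :
    1 ≤ fcubicExponent m (none, k) (x, k) := by
  simp [fcubicExponent_none_apply]

lemma two_le_fcubicExponent_some (w : Fin 3) (k : ZMod m) :
    2 ≤ fcubicExponent m (some w, k) (w, k + 1) := by
  simp [fcubicExponent_some_apply]

lemma fcubicExponent_injective : Function.Injective (fcubicExponent m) := by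
  rintro ⟨_ | w, k⟩ ⟨_ | w', k'⟩ h
  · have : 1 ≤ fcubicExponent m (none, k') (0, k) := h ▸ one_le_fcubicExponent_none k 0
    rw [eq_of_one_le_fcubicExponent_none this]
  · have : 2 ≤ fcubicExponent m (none, k) (w', k' + 1) := h ▸ two_le_fcubicExponent_some w' k'
    exact absurd this (not_two_le_fcubicExponent_none _ _ _)
  · have : 2 ≤ fcubicExponent m (none, k') (w, k + 1) := h ▸ two_le_fcubicExponent_some w k
    exact absurd this (not_two_le_fcubicExponent_none _ _ _)
  · have : 2 ≤ fcubicExponent m (some w', k') (w, k + 1) := h ▸ two_le_fcubicExponent_some w k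
    obtain ⟨rfl, hk⟩ := of_two_le_fcubicExponent_some this
    rw [add_right_cancel hk]

end CubicExponents

section Fcubic

variable {K : Type*} [Field K] {m : ℕ}

lemma Fcubic_eq_sum [NeZero m] : Fcubic K m = ∑ p, monomial (fcubicExponent m p) (1 : K) := by
  rw [Fintype.sum_prod_type_right, Fcubic]
  refine Finset.sum_nbij' (fun i => (i : ZMod m)) ZMod.val (by simp)
    (fun j _ => Finset.mem_range.mpr (ZMod.val_lt j))
    (fun i hi => ZMod.val_natCast_of_lt (Finset.mem_range.mp hi))
    (fun j _ => ZMod.natCast_zmod_val j) fun i _ => ?_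
  simp [Fintype.sum_option, Fin.sum_univ_three, fcubicExponent, add_assoc]

lemma Fcubic_isHomogeneous [NeZero m] : (Fcubic K m).IsHomogeneous 3 := by
  rw [Fcubic_eq_sum]
  exact IsHomogeneous.sum _ _ _ fun p _ => isHomogeneous_monomial _ (degree_fcubicExponent p)

lemma divMonomial_Fcubic_eq_zero [NeZero m] {d : Fin 3 × ZMod m →₀ ℕ}
    (h : ∀ p, ¬ d ≤ fcubicExponent m p) : (Fcubic K m).divMonomial d = 0 := by
  ext a
  rw [coeff_divMonomial, coeff_zero, Fcubic_eq_sum]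
  exact coeff_sum_monomial_of_notMem_range fun ⟨p, hp⟩ => h p (hp ▸ le_self_add)

lemma divMonomial_Fcubic_eq_monomial [NeZero m] {d t : Fin 3 × ZMod m →₀ ℕ}
    (ht : ∃ p, fcubicExponent m p = d + t)
    (h : ∀ p, d ≤ fcubicExponent m p → fcubicExponent m p = d + t) :
    (Fcubic K m).divMonomial d = monomial t 1 := by
  classical
  ext a
  rw [coeff_divMonomial, coeff_monomial, Fcubic_eq_sum]
  split_ifs with hta
  · obtain ⟨p, hp⟩ := ht
    rw [← hta, ← hp, coeff_sum_monomial_of_injective fcubicExponent_injective]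
  · refine coeff_sum_monomial_of_notMem_range fun ⟨p, hp⟩ => hta ?_
    have := h p (hp ▸ le_self_add)
    rw [hp] at this
    exact (add_left_cancel this).symm

lemma contract_X_mul_X_Fcubic_of_not_adjacent [NeZero m] (x y : Fin 3) {i j : ZMod m}
    (h₁ : j ≠ i - 1) (h₂ : j ≠ i) (h₃ : j ≠ i + 1) :
    contract (X (x, i) * X (y, j)) (Fcubic K m) = 0 := by
  rw [contract_X_mul_X, divMonomial_Fcubic_eq_zero]
  rintro ⟨_ | w, k⟩ hle <;> obtain ⟨hx, hy⟩ := le_apply_of_single_add_single_le hle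
  · exact h₂ ((eq_of_one_le_fcubicExponent_none hy).symm.trans
      (eq_of_one_le_fcubicExponent_none hx))
  · obtain ⟨-, hki⟩ := of_one_le_fcubicExponent_some hx
    obtain ⟨-, hkj⟩ := of_one_le_fcubicExponent_some hy
    rcases hki with rfl | rfl <;> rcases hkj with rfl | rfl <;> simp_all

lemma contract_X_mul_X_succ_Fcubic_of_ne (hm : 1 < m) {x y : Fin 3} (hxy : x ≠ y) (i : ZMod m) :
    contract (X (x, i) * X (y, i + 1)) (Fcubic K m) = 0 := by
  have : NeZero m := NeZero.of_pos (by omega)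
  rw [contract_X_mul_X, divMonomial_Fcubic_eq_zero]
  rintro ⟨_ | w, k⟩ hle <;> obtain ⟨hx, hy⟩ := le_apply_of_single_add_single_le hle
  · have h₁ : i ≠ i + 1 := by simpa using ZMod.ne_add_natCast one_pos hm i
    exact h₁ ((eq_of_one_le_fcubicExponent_none hx).symm.trans
      (eq_of_one_le_fcubicExponent_none hy))
  · exact hxy ((of_one_le_fcubicExponent_some hx).1.symm.trans
      (of_one_le_fcubicExponent_some hy).1)

lemma fcubicExponent_none_eq {x y z : Fin 3} (hxy : x ≠ y) (hxz : x ≠ z) (hyz : y ≠ z)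
    (i : ZMod m) :
    fcubicExponent m (none, i) = single (y, i) 1 + single (z, i) 1 + single (x, i) 1 := by
  fin_cases x <;> fin_cases y <;> fin_cases z <;> simp_all [fcubicExponent] <;> abel

lemma contract_X_mul_X_Fcubic_of_distinct [NeZero m] {x y z : Fin 3} (hxy : x ≠ y)
    (hxz : x ≠ z) (hyz : y ≠ z) (i : ZMod m) :
    contract (X (y, i) * X (z, i)) (Fcubic K m) = X (x, i) := by
  rw [contract_X_mul_X,
    divMonomial_Fcubic_eq_monomial ⟨(none, i), fcubicExponent_none_eq hxy hxz hyz i⟩]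
  · rfl
  rintro ⟨_ | w, k⟩ hle <;> obtain ⟨hy, hz⟩ := le_apply_of_single_add_single_le hle
  · rw [eq_of_one_le_fcubicExponent_none hy, fcubicExponent_none_eq hxy hxz hyz]
  · exact absurd ((of_one_le_fcubicExponent_some hy).1.symm.trans
      (of_one_le_fcubicExponent_some hz).1) hyz

lemma contract_X_sq_Fcubic [NeZero m] (x : Fin 3) (k : ZMod m) :
    contract (X (x, k + 1) ^ 2) (Fcubic K m) = X (x, k) := by
  rw [contract_X_sq,
    divMonomial_Fcubic_eq_monomial (t := single (x, k) 1) ⟨(some x, k), add_comm _ _⟩]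
  · rfl
  rintro ⟨_ | w, k'⟩ hle
  · exact absurd (by simpa using hle (x, k + 1)) (not_two_le_fcubicExponent_none k' x (k + 1))
  · obtain ⟨rfl, hk⟩ := of_two_le_fcubicExponent_some (by simpa using hle (x, k + 1))
    rw [add_right_cancel hk]
    exact add_comm _ _

lemma contract_X_mul_X_succ_Fcubic (hm : 2 < m) (z : Fin 3) (k : ZMod m) :
    contract (X (z, k) * X (z, k + 1)) (Fcubic K m) = X (z, k + 1) := by
  have : NeZero m := NeZero.of_pos (by omega)
  have hexp : fcubicExponent m (some z, k) =
      single (z, k) 1 + single (z, k + 1) 1 + single (z, k + 1) 1 := by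
    rw [add_assoc, ← single_add]
    rfl
  have h₁ : k ≠ k + 1 := by simpa using ZMod.ne_add_natCast one_pos (by omega) k
  have h₂ : k ≠ k + 2 := by simpa using ZMod.ne_add_natCast two_pos hm k
  rw [contract_X_mul_X, divMonomial_Fcubic_eq_monomial ⟨(some z, k), hexp⟩]
  · rfl
  rintro ⟨_ | w, k'⟩ hle <;> obtain ⟨hle₁, hle₂⟩ := le_apply_of_single_add_single_le hle
  · exact absurd ((eq_of_one_le_fcubicExponent_none hle₁).symm.trans
      (eq_of_one_le_fcubicExponent_none hle₂)) h₁
  · obtain ⟨rfl, hk⟩ := of_one_le_fcubicExponent_some hle₁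
    obtain ⟨-, hk1⟩ := of_one_le_fcubicExponent_some hle₂
    rcases hk with hk | hk <;> rcases hk1 with hk1 | hk1
    · exact absurd (hk.symm.trans hk1) h₁
    · rw [hk, hexp]
    · exact absurd (by linear_combination hk1 - hk) h₂
    · exact absurd (hk.symm.trans hk1) h₁

lemma contract_Fcubic_of_mem_IabcGens (hm : 2 < m) {s : MvPolynomial (Fin 3 × ZMod m) K}
    (hs : s ∈ IabcGens K m) : contract s (Fcubic K m) = 0 := by
  have : NeZero m := NeZero.of_pos (by omega)
  have hpred (i : ZMod m) : ∃ k, i = k + 1 := ⟨i - 1, (sub_add_cancel i 1).symm⟩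
  rcases hs with ((⟨x, y, i, j, h₁, h₂, h₃, rfl⟩ | ⟨x, y, i, j, hxy, rfl⟩) |
    ⟨x, y, z, i, hxy, hxz, hyz, rfl⟩) | ⟨x, y, z, i, hxy, hxz, hyz, rfl⟩
  · exact contract_X_mul_X_Fcubic_of_not_adjacent x y h₁ h₂ h₃
  · rw [V, V, V, V, contract_sub, contract_X_mul_X_succ_Fcubic_of_ne (by omega) hxy,
      contract_X_mul_X_succ_Fcubic_of_ne (by omega) hxy, sub_zero]
  · obtain ⟨k, rfl⟩ := hpred i
    rw [V, V, V, contract_sub, add_sub_cancel_right, contract_X_sq_Fcubic,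
      contract_X_mul_X_Fcubic_of_distinct hxy hxz hyz, sub_self]
  · obtain ⟨k, rfl⟩ := hpred i
    rw [V, V, V, V, contract_sub, add_sub_cancel_right, contract_X_mul_X_succ_Fcubic hm,
      contract_X_mul_X_Fcubic_of_distinct hxz.symm hyz.symm hxy, sub_self]

lemma X_mem_map_contractLinearMap_Fcubic [NeZero m] (u : Fin 3 × ZMod m) :
    X u ∈ (homogeneousSubmodule _ K 2).map (contractLinearMap (Fcubic K m)) := by
  obtain ⟨x, i⟩ := u
  refine ⟨X (x + 1, i) * X (x + 2, i), (isHomogeneous_X _ _).mul (isHomogeneous_X _ _),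
    contract_X_mul_X_Fcubic_of_distinct ?_ ?_ ?_ i⟩ <;> fin_cases x <;> decide

lemma Fcubic_ne_zero [NeZero m] : Fcubic K m ≠ 0 := by
  intro h
  obtain ⟨q, -, hq⟩ := X_mem_map_contractLinearMap_Fcubic (K := K) ((0 : Fin 3), (0 : ZMod m))
  rw [contractLinearMap_apply, h, contract_zero_right] at hq
  exact X_ne_zero _ hq.symm

end Fcubic

theorem Iabc_le_ann_Fcubic_and_hilbert (K : Type*) [Field K] (m : ℕ) (hm : 6 ≤ m) :
    (∀ s ∈ IabcGens K m, contract s (Fcubic K m) = 0) ∧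
    Iabc K m ≤ annIdeal (Fcubic K m) ∧
    (∀ s : MvPolynomial (Fin 3 × ZMod m) K, s.IsHomogeneous 1 → s ≠ 0 →
      contract s (Fcubic K m) ≠ 0) ∧
    hilbQ (annIdeal (Fcubic K m)) 0 = 1 ∧
    hilbQ (annIdeal (Fcubic K m)) 1 = 3 * m ∧
    hilbQ (annIdeal (Fcubic K m)) 2 = 3 * m ∧
    hilbQ (annIdeal (Fcubic K m)) 3 = 1 ∧
    (∀ i : ℕ, 3 < i → hilbQ (annIdeal (Fcubic K m)) i = 0) := by
  have : NeZero m := NeZero.of_pos (by omega)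
  have hgens : ∀ s ∈ IabcGens K m, contract s (Fcubic K m) = 0 :=
    fun s => contract_Fcubic_of_mem_IabcGens (by omega)
  have hX := X_mem_map_contractLinearMap_Fcubic (K := K) (m := m)
  have hlin : ∀ s : MvPolynomial (Fin 3 × ZMod m) K, s.IsHomogeneous 1 → s ≠ 0 →
      contract s (Fcubic K m) ≠ 0 := fun s =>
    contract_ne_zero_of_forall_X_eq_contract fun u => (hX u).imp fun _ hq => hq.2
  have hcard : Fintype.card (Fin 3 × ZMod m) = 3 * m := by simp [ZMod.card]
  refine ⟨hgens, Ideal.span_le.mpr hgens, hlin, hilbQ_annIdeal_zero Fcubic_ne_zero,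
    hcard ▸ hilbQ_annIdeal_one hlin,
    hcard ▸ hilbQ_annIdeal_of_forall_X_mem Fcubic_isHomogeneous hX,
    hilbQ_annIdeal_self Fcubic_isHomogeneous Fcubic_ne_zero,
    fun i hi => hilbQ_annIdeal_of_lt Fcubic_isHomogeneous hi⟩
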